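/- arXiv:2603.18179 — 7 statements merged into one kernel-verified Lean document; each statement's English description precedes it below -/
import Mathlib

section
/- Let G be a finite abelian group and Γ a set of d characters of G. Then for any δ ∈ (0,1], the Bohr set B(Γ,2δ) satisfies μ_G(B(Γ,2δ)) ≤ 100^d · μ_G(B(Γ,δ)), where μ_G is the uniform probability measure on G. -/
/-!
Cut the plane into a grid of squares of side `δ / 2`. Two points in the same square are
at distance less than `δ`, and the disc of radius `2δ` about `1` meets at most `9 × 9` squares.
Sorting `x ∈ B(Γ, 2δ)` by the squares containing the values `γ x`, `γ ∈ Γ`, gives at most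
`81 ^ d` classes, and any two elements `x, y` of one class satisfy `y - x ∈ B(Γ, δ)`, since
`|γ (y - x) - 1| = |γ y - γ x|`. So each class is a translate of a subset of `B(Γ, δ)`.
-/

open scoped Classical

open Finset

theorem Finset.card_le_card_mul_card_of_sub_mem {α β : Type*} [AddGroup α] {A B : Finset α}
    {t : Finset β} (f : α → β) (hf : ∀ x ∈ A, f x ∈ t)
    (hB : ∀ x ∈ A, ∀ y ∈ A, f x = f y → y - x ∈ B) : #A ≤ #t * #B := by
  rw [mul_comm]
  refine card_le_mul_card_image_of_maps_to hf _ fun c _ ↦ ?_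
  obtain h | ⟨x, hx⟩ := {y ∈ A | f y = c}.eq_empty_or_nonempty
  · simp [h]
  rw [mem_filter] at hx
  refine card_le_card_of_injOn (· - x) (fun y hy ↦ ?_) (sub_left_injective.injOn)
  rw [coe_filter, Set.mem_ofPred_eq] at hy
  exact hB x hx.1 y hy.1 (hx.2.trans hy.2.symm)

theorem Int.floor_div_mem_Icc_of_abs_sub_le {s x a : ℝ} (hs : 0 < s) {k : ℕ}
    (h : |x - a| ≤ k * s) : ⌊x / s⌋ ∈ Icc (⌊a / s⌋ - k) (⌊a / s⌋ + k) := by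
  obtain ⟨hlo, hhi⟩ := abs_sub_le_iff.mp h
  rw [mem_Icc, ← Int.floor_sub_natCast, ← Int.floor_add_natCast]
  constructor <;> apply Int.floor_mono
  · rw [le_div_iff₀ hs, sub_mul, div_mul_cancel₀ _ hs.ne']
    linarith
  · rw [div_le_iff₀ hs, add_mul, div_mul_cancel₀ _ hs.ne']
    linarith

namespace Complex

noncomputable def gridCell (s : ℝ) (z : ℂ) : ℤ × ℤ :=
  (⌊z.re / s⌋, ⌊z.im / s⌋)

noncomputable def gridBlock (s : ℝ) (c : ℂ) (k : ℕ) : Finset (ℤ × ℤ) :=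
  Icc (⌊c.re / s⌋ - k) (⌊c.re / s⌋ + k) ×ˢ Icc (⌊c.im / s⌋ - k) (⌊c.im / s⌋ + k)

theorem card_gridBlock (s : ℝ) (c : ℂ) (k : ℕ) : #(gridBlock s c k) = (2 * k + 1) ^ 2 := by
  have hwidth (a : ℤ) : (a + k + 1 - (a - k)).toNat = 2 * k + 1 := by omega
  rw [gridBlock, card_product, Int.card_Icc, Int.card_Icc, hwidth, hwidth, sq]

theorem gridCell_mem_gridBlock {s : ℝ} (hs : 0 < s) {z c : ℂ} {k : ℕ} (h : ‖z - c‖ ≤ k * s) :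
    gridCell s z ∈ gridBlock s c k :=
  mem_product.mpr
    ⟨Int.floor_div_mem_Icc_of_abs_sub_le hs ((abs_re_le_norm (z - c)).trans h),
      Int.floor_div_mem_Icc_of_abs_sub_le hs ((abs_im_le_norm (z - c)).trans h)⟩

theorem norm_sub_lt_of_gridCell_eq {s : ℝ} (hs : 0 < s) {z w : ℂ}
    (h : gridCell s z = gridCell s w) : ‖z - w‖ < 2 * s := by
  have hdiv (a b : ℝ) (hab : ⌊a / s⌋ = ⌊b / s⌋) : |a - b| < s := by
    simpa [← sub_div, abs_div, abs_of_pos hs, div_lt_one hs] using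
      Int.abs_sub_lt_one_of_floor_eq_floor hab
  obtain ⟨hre, him⟩ := Prod.ext_iff.mp h
  calc ‖z - w‖ ≤ |(z - w).re| + |(z - w).im| := norm_le_abs_re_add_abs_im _
    _ < s + s := add_lt_add (hdiv _ _ hre) (hdiv _ _ him)
    _ = 2 * s := by ring

end Complex

theorem AddChar.norm_map_sub_sub_one {G : Type*} [AddCommGroup G] [Finite G]
    (γ : AddChar G ℂ) (x y : G) : ‖γ (y - x) - 1‖ = ‖γ y - γ x‖ := by
  have hx : γ x ≠ 0 := fun h ↦ by simpa [h] using γ.norm_apply x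
  rw [γ.map_sub_eq_div, ← div_self hx, ← sub_div, norm_div, γ.norm_apply, div_one]

noncomputable def bohrSet {G : Type*} [AddGroup G] [Fintype G] (Γ : Finset (AddChar G ℂ))
    (δ : ℝ) : Finset G :=
  {x | ∀ γ ∈ Γ, ‖γ x - 1‖ ≤ δ}

open Complex in
theorem card_bohrSet_two_mul_le {G : Type*} [AddCommGroup G] [Fintype G]
    (Γ : Finset (AddChar G ℂ)) {δ : ℝ} (hδ : 0 < δ) :
    #(bohrSet Γ (2 * δ)) ≤ 81 ^ #Γ * #(bohrSet Γ δ) := by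
  have hs : 0 < δ / 2 := by positivity
  let cells (x : G) (γ : Γ) : ℤ × ℤ := gridCell (δ / 2) (γ.1 x)
  have hcard : #(Fintype.piFinset fun _ : Γ ↦ gridBlock (δ / 2) 1 4) = 81 ^ #Γ := by
    simp [Fintype.card_piFinset, card_gridBlock]
  rw [← hcard]
  refine card_le_card_mul_card_of_sub_mem cells (fun x hx ↦ ?_) (fun x _ y _ hxy ↦ ?_)
  · simp only [bohrSet, mem_filter, mem_univ, true_and] at hx
    refine Fintype.mem_piFinset.mpr fun γ ↦ gridCell_mem_gridBlock hs ?_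
    linarith [hx γ γ.2]
  · simp only [bohrSet, mem_filter, mem_univ, true_and]
    intro γ hγ
    rw [γ.norm_map_sub_sub_one]
    have := norm_sub_lt_of_gridCell_eq hs (congrFun hxy ⟨γ, hγ⟩).symm
    linarith

/-- Growth of Bohr sets: `μ_G(B(Γ,2δ)) ≤ 100^d · μ_G(B(Γ,δ))`. -/
theorem bohr_growth {G : Type} [AddCommGroup G] [Fintype G]
    (Γ : Finset (AddChar G ℂ)) (d : ℕ) (hd : Γ.card = d)
    (δ : ℝ) (hδ : δ ∈ Set.Ioc (0 : ℝ) 1) :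
    (Nat.card {x : G | ∀ γ ∈ Γ, ‖γ x - 1‖ ≤ 2 * δ} : ℝ) / Fintype.card G ≤
      100 ^ d *
        ((Nat.card {x : G | ∀ γ ∈ Γ, ‖γ x - 1‖ ≤ δ} : ℝ) / Fintype.card G) := by
  have hcard (r : ℝ) : Nat.card {x : G | ∀ γ ∈ Γ, ‖γ x - 1‖ ≤ r} = #(bohrSet Γ r) := by
    rw [bohrSet, Nat.card_eq_fintype_card, ← Fintype.card_subtype]
    rfl
  have hgrowth : (#(bohrSet Γ (2 * δ)) : ℝ) ≤ 100 ^ d * #(bohrSet Γ δ) := by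
    calc (#(bohrSet Γ (2 * δ)) : ℝ) ≤ 81 ^ d * #(bohrSet Γ δ) := by
          exact_mod_cast hd ▸ card_bohrSet_two_mul_le Γ hδ.1
      _ ≤ 100 ^ d * #(bohrSet Γ δ) := by gcongr; norm_num
  rw [hcard, hcard, mul_div_assoc']
  gcongr
end

section
/- Let G be a finite abelian group, η, κ ∈ (0,1], B₀, B₁ ⊆ G nonempty sets with μ_G(B₁ + B₀) ≤ (1+η)·μ_G(B₀), and γ a character of G with |μ̂_{B₀}(γ)| ≥ κ. Then |1 − γ(x)| ≤ 2η/κ for all x ∈ B₁ − B₁. -/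
open scoped Classical Pointwise

/-!
Put `S = ∑_{x ∈ B₀} ψ x` with `ψ = γ⁻¹ = conj ∘ γ`, and `T = ∑_{y ∈ B₁ + B₀} ψ y`. For `b ∈ B₁` the
translate `b + B₀` fills all of `B₁ + B₀` except at most `η |B₀|` points, so `‖T - ψ b * S‖ ≤ η |B₀|`.
Comparing two such `b, b'` through `T` gives `|ψ b - ψ b'| |S| ≤ 2η |B₀|`, while `|S| ≥ κ |B₀|` and
`|ψ b - ψ b'| = |1 - γ (b - b')|`.
-/

open Finset

namespace AddChar

variable {G 𝕜 : Type*} [AddCommGroup G] [Finite G] [NormedDivisionRing 𝕜]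

lemma norm_sum_sub_mul_sum_le (ψ : AddChar G 𝕜) {s t : Finset G} {a : G}
    (ha : ∀ x ∈ s, a + x ∈ t) :
    ‖∑ y ∈ t, ψ y - ψ a * ∑ x ∈ s, ψ x‖ ≤ #t - #s := by
  set u := s.map (addLeftEmbedding a)
  have hut : u ⊆ t := by simpa [u, subset_iff] using ha
  have hu : ∑ y ∈ u, ψ y = ψ a * ∑ x ∈ s, ψ x := by
    simp only [u, sum_map, addLeftEmbedding_apply, map_add_eq_mul, mul_sum]
  rw [← hu, ← sum_sdiff hut, add_sub_cancel_right]
  calc ‖∑ y ∈ t \ u, ψ y‖ ≤ ∑ y ∈ t \ u, ‖ψ y‖ := norm_sum_le _ _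
    _ = #(t \ u) := by simp
    _ = #t - #s := by rw [card_sdiff_of_subset hut, Nat.cast_sub (card_le_card hut), card_map]

lemma norm_one_sub_apply_mul_norm_sum_le (ψ : AddChar G 𝕜) {s t : Finset G} {a b : G}
    (ha : ∀ x ∈ s, a + x ∈ t) (hb : ∀ x ∈ s, b + x ∈ t) :
    ‖1 - ψ (b - a)‖ * ‖∑ x ∈ s, ψ x‖ ≤ 2 * (#t - #s) := by
  set S := ∑ x ∈ s, ψ x
  set T := ∑ y ∈ t, ψ y
  have hab : ψ a * S - ψ b * S = ψ a * ((1 - ψ (b - a)) * S) := by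
    rw [← add_sub_cancel a b, map_add_eq_mul, add_sub_cancel_left]; noncomm_ring
  calc ‖1 - ψ (b - a)‖ * ‖S‖ = ‖ψ a * S - ψ b * S‖ := by simp [hab]
    _ = ‖(T - ψ b * S) - (T - ψ a * S)‖ := by congr 1; abel
    _ ≤ ‖T - ψ b * S‖ + ‖T - ψ a * S‖ := norm_sub_le _ _
    _ ≤ 2 * (#t - #s) := by
      linarith [ψ.norm_sum_sub_mul_sum_le ha, ψ.norm_sum_sub_mul_sum_le hb]

lemma norm_one_sub_apply_le (ψ : AddChar G 𝕜) {s t : Finset G} {a b : G}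
    (ha : ∀ x ∈ s, a + x ∈ t) (hb : ∀ x ∈ s, b + x ∈ t) {η κ : ℝ}
    (hst : (#t : ℝ) ≤ (1 + η) * #s) (hκ : 0 < κ) (hψ : κ ≤ ‖∑ x ∈ s, ψ x‖ / #s) :
    ‖1 - ψ (b - a)‖ ≤ 2 * η / κ := by
  -- `‖S‖ / 0 = 0`, so `hψ` rules out `s = ∅`.
  have hs : (0 : ℝ) < #s := by
    by_contra! h
    rw [le_antisymm h (Nat.cast_nonneg _), div_zero] at hψ
    linarith
  rw [le_div_iff₀ hs] at hψ
  rw [le_div_iff₀ hκ]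
  refine le_of_mul_le_mul_right ?_ hs
  calc ‖1 - ψ (b - a)‖ * κ * #s ≤ ‖1 - ψ (b - a)‖ * ‖∑ x ∈ s, ψ x‖ := by
        rw [mul_assoc]; gcongr
    _ ≤ 2 * (#t - #s) := ψ.norm_one_sub_apply_mul_norm_sum_le ha hb
    _ ≤ 2 * η * #s := by linarith

end AddChar

theorem fourier_bohr_approx_general {G : Type} [AddCommGroup G] [Fintype G]
    (η κ : ℝ) (hκ : κ ∈ Set.Ioc (0 : ℝ) 1)
    (B₀ B₁ : Set G)
    (hadd : (Nat.card (B₁ + B₀) : ℝ) / Fintype.card G ≤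
      (1 + η) * ((Nat.card B₀ : ℝ) / Fintype.card G))
    (γ : AddChar G ℂ)
    (hγ : κ ≤ ‖(Nat.card B₀ : ℂ)⁻¹ *
      ∑ x : G, if x ∈ B₀ then (starRingEnd ℂ) (γ x) else 0‖) :
    ∀ x ∈ B₁ - B₁, ‖1 - γ x‖ ≤ 2 * η / κ := by
  rintro _ ⟨a, ha, b, hb, rfl⟩
  have hsum : ∑ x : G, (if x ∈ B₀ then (starRingEnd ℂ) (γ x) else 0) =
      ∑ x ∈ B₀.toFinset, γ⁻¹ x := by
    rw [← sum_filter, Set.filter_mem_univ_eq_toFinset]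
    simp only [AddChar.inv_apply, AddChar.map_neg_eq_conj]
  rw [hsum, Nat.card_eq_card_toFinset, norm_mul, norm_inv, Complex.norm_natCast,
    inv_mul_eq_div] at hγ
  rw [Nat.card_eq_card_toFinset, Nat.card_eq_card_toFinset, ← mul_div_assoc,
    div_le_div_iff_of_pos_right (by exact_mod_cast Fintype.card_pos)] at hadd
  have hB : ∀ c ∈ B₁, ∀ x ∈ B₀.toFinset, c + x ∈ (B₁ + B₀).toFinset := fun c hc x hx =>
    Set.mem_toFinset.mpr (Set.add_mem_add hc (Set.mem_toFinset.mp hx))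
  simpa only [AddChar.inv_apply, neg_sub] using γ⁻¹.norm_one_sub_apply_le (hB a ha) (hB b hb) hadd hκ.1 hγ

/-- If `μ_G(B₁+B₀) ≤ (1+η)μ_G(B₀)` and `|μ̂_{B₀}(γ)| ≥ κ`, then
`|1 − γ(x)| ≤ 2η/κ` for all `x ∈ B₁ − B₁`. -/
theorem fourier_bohr_approx {G : Type} [AddCommGroup G] [Fintype G]
    (η κ : ℝ) (hη : η ∈ Set.Ioc (0 : ℝ) 1) (hκ : κ ∈ Set.Ioc (0 : ℝ) 1)
    (B₀ B₁ : Set G) (h₀ : B₀.Nonempty) (h₁ : B₁.Nonempty)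
    (hadd : (Nat.card (B₁ + B₀) : ℝ) / Fintype.card G ≤
      (1 + η) * ((Nat.card B₀ : ℝ) / Fintype.card G))
    (γ : AddChar G ℂ)
    (hγ : κ ≤ ‖(Nat.card B₀ : ℂ)⁻¹ *
      ∑ x : G, if x ∈ B₀ then (starRingEnd ℂ) (γ x) else 0‖) :
    ∀ x ∈ B₁ - B₁, ‖1 - γ x‖ ≤ 2 * η / κ :=
  fourier_bohr_approx_general η κ hκ B₀ B₁ hadd γ hγ
end

section
/- Let G be a finite abelian group, α, η ∈ (0,1], and B₀, B₁ ⊆ G nonempty with μ_G(B₀ + B₁) ≤ (1+η)·μ_G(B₀). Suppose A ⊆ G satisfies ‖1_A ∗ μ_{B₀}‖_∞ ≥ α. Then for every probability measure ν supported in B₁ − B₁, we have ‖1_A ∗ ν‖_∞ ≥ α − 2η. -/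
/-!
Write `M = 1_A ∗ μ_{B₀}`. Since `B₀ + b'` and `B₀ + b` both lie in `B₀ + B₁`, small doubling
forces `B₀` and `B₀ + (b - b')` to differ in at most `η |B₀|` points, so `M` drops by at most `η`
under translation by any `d ∈ B₁ - B₁`. Averaging against `ν` gives
`(1_A ∗ ν) ∗ μ_{B₀} (x₀) = M ∗ ν (x₀) ≥ α - η`, and an average of `1_A ∗ ν` is at most its maximum.
-/

open scoped Classical Pointwise

open Finset

section Translates

variable {G : Type*} [AddCommGroup G] [DecidableEq G]

theorem Finset.card_sdiff_vadd_add_card_le_card_add {s t : Finset G} {b b' : G}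
    (hb : b ∈ t) (hb' : b' ∈ t) : #(s \ ((b - b') +ᵥ s)) + #s ≤ #(s + t) := by
  have hsub : ∀ c ∈ t, c +ᵥ s ⊆ s + t := fun c hc z hz => by
    obtain ⟨y, hy, rfl⟩ := mem_vadd_finset.1 hz
    rw [vadd_eq_add, add_comm c y]
    exact add_mem_add hy hc
  calc #(s \ ((b - b') +ᵥ s)) + #s = #((b' +ᵥ s) \ (b +ᵥ s)) + #(b +ᵥ s) := by
        rw [← card_vadd_finset b' (s \ _), vadd_finset_sdiff, vadd_vadd, add_sub_cancel,
          card_vadd_finset]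
    _ = #((b' +ᵥ s) ∪ (b +ᵥ s)) := card_sdiff_add_card _ _
    _ ≤ #(s + t) := card_le_card (union_subset (hsub b' hb') (hsub b hb))

theorem Finset.sum_sub_sum_translate_le_card_sdiff {f : G → ℝ} (hf0 : 0 ≤ f) (hf1 : f ≤ 1)
    (s : Finset G) (x d : G) :
    ∑ y ∈ s, f (x - y) - ∑ y ∈ s, f (x - d - y) ≤ #(s \ (d +ᵥ s)) := by
  have hshift : ∑ y ∈ s, f (x - d - y) = ∑ z ∈ d +ᵥ s, f (x - z) := by
    rw [← image_vadd, sum_image fun _ _ _ _ h => by simpa using h]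
    simp only [vadd_eq_add, sub_add_eq_sub_sub]
  rw [hshift, ← sum_sdiff_sub_sum_sdiff]
  calc ∑ z ∈ s \ (d +ᵥ s), f (x - z) - ∑ z ∈ (d +ᵥ s) \ s, f (x - z)
      ≤ ∑ z ∈ s \ (d +ᵥ s), f (x - z) := sub_le_self _ (sum_nonneg fun z _ => hf0 _)
    _ ≤ ∑ _z ∈ s \ (d +ᵥ s), 1 := sum_le_sum fun z _ => hf1 _
    _ = #(s \ (d +ᵥ s)) := by simp

end Translates

section UniformWeight

variable {G : Type*} [DecidableEq G]

/-- The density of the uniform probability measure `μ_s`. -/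
noncomputable def uniformWeight (s : Finset G) (y : G) : ℝ := if y ∈ s then (#s : ℝ)⁻¹ else 0

theorem uniformWeight_nonneg (s : Finset G) : 0 ≤ uniformWeight s := fun y => by
  unfold uniformWeight; positivity

theorem sum_uniformWeight [Fintype G] {s : Finset G} (hs : s.Nonempty) :
    ∑ y, uniformWeight s y = 1 := by
  simp [uniformWeight, hs.card_ne_zero]

end UniformWeight

section Convolution

variable {G : Type*} [AddCommGroup G] [Fintype G]

def dconv (f μ : G → ℝ) (x : G) : ℝ := ∑ y, f (x - y) * μ y

theorem dconv_dconv_comm (f μ ν : G → ℝ) : dconv (dconv f ν) μ = dconv (dconv f μ) ν := by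
  ext x
  simp only [dconv, sum_mul, mul_assoc]
  rw [sum_comm]
  refine sum_congr rfl fun z _ => sum_congr rfl fun y _ => ?_
  rw [sub_right_comm, mul_comm (ν z)]

theorem exists_dconv_le {g μ : G → ℝ} (hμ0 : 0 ≤ μ) (hμ1 : ∑ y, μ y = 1) (x : G) :
    ∃ x', dconv g μ x ≤ g x' := by
  obtain ⟨x', -, hx'⟩ := exists_max_image univ g univ_nonempty
  refine ⟨x', ?_⟩
  calc dconv g μ x ≤ ∑ y, g x' * μ y :=
        sum_le_sum fun y _ => mul_le_mul_of_nonneg_right (hx' _ (mem_univ _)) (hμ0 y)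
    _ = g x' := by rw [← mul_sum, hμ1, mul_one]

theorem le_dconv_of_forall_ne_zero {g μ : G → ℝ} {a : ℝ} (hμ0 : 0 ≤ μ) (hμ1 : ∑ y, μ y = 1)
    (x : G) (h : ∀ y, μ y ≠ 0 → a ≤ g (x - y)) : a ≤ dconv g μ x :=
  calc a = ∑ y, a * μ y := by rw [← mul_sum, hμ1, mul_one]
    _ ≤ dconv g μ x := sum_le_sum fun y _ => by
        rcases eq_or_ne (μ y) 0 with hy | hy
        · simp [hy]
        · exact mul_le_mul_of_nonneg_right (h y hy) (hμ0 y)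

variable [DecidableEq G]

theorem dconv_uniformWeight (f : G → ℝ) (s : Finset G) (x : G) :
    dconv f (uniformWeight s) x = (∑ y ∈ s, f (x - y)) / #s := by
  simp [dconv, uniformWeight, mul_ite, div_eq_mul_inv, sum_mul]

theorem dconv_uniformWeight_sub_le {f : G → ℝ} (hf0 : 0 ≤ f) (hf1 : f ≤ 1) {s t : Finset G}
    (hs : s.Nonempty) {η : ℝ} (hst : (#(s + t) : ℝ) ≤ (1 + η) * #s) {b b' : G} (hb : b ∈ t)
    (hb' : b' ∈ t) (x : G) :
    dconv f (uniformWeight s) x - η ≤ dconv f (uniformWeight s) (x - (b - b')) := by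
  have hcard : (#(s \ ((b - b') +ᵥ s)) : ℝ) ≤ η * #s := by
    have : (#(s \ ((b - b') +ᵥ s)) : ℝ) + #s ≤ #(s + t) := by
      exact_mod_cast card_sdiff_vadd_add_card_le_card_add hb hb'
    linarith
  have hsum := sum_sub_sum_translate_le_card_sdiff hf0 hf1 s x (b - b')
  have hs' : (0 : ℝ) < #s := by exact_mod_cast hs.card_pos
  rw [dconv_uniformWeight, dconv_uniformWeight]
  calc (∑ y ∈ s, f (x - y)) / #s - η = (∑ y ∈ s, f (x - y) - η * #s) / #s := by
        field_simp
    _ ≤ (∑ y ∈ s, f (x - (b - b') - y)) / #s := by gcongr; linarith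

end Convolution

theorem hereditary_density_general {G : Type} [AddCommGroup G] [Fintype G]
    (α η : ℝ) (hη : η ∈ Set.Ioc (0 : ℝ) 1)
    (B₀ B₁ : Set G) (h₀ : B₀.Nonempty)
    (hadd : (Nat.card (B₀ + B₁) : ℝ) / Fintype.card G ≤
      (1 + η) * ((Nat.card B₀ : ℝ) / Fintype.card G))
    (A : Set G)
    (hA : ∃ x : G, α ≤ ∑ y : G, if x - y ∈ A ∧ y ∈ B₀ then (Nat.card B₀ : ℝ)⁻¹ else 0)
    (ν : G → ℝ) (hν0 : ∀ y, 0 ≤ ν y) (hν1 : ∑ y : G, ν y = 1)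
    (hνsupp : ∀ y, ν y ≠ 0 → y ∈ B₁ - B₁) :
    ∃ x : G, α - 2 * η ≤ ∑ y : G, (if x - y ∈ A then (1 : ℝ) else 0) * ν y := by
  lift B₀ to Finset G using B₀.toFinite
  lift B₁ to Finset G using B₁.toFinite
  have h₀ : B₀.Nonempty := coe_nonempty.1 h₀
  set f : G → ℝ := fun z => if z ∈ A then 1 else 0
  have hf0 : 0 ≤ f := fun z => by simp only [f]; split_ifs <;> norm_num
  have hf1 : f ≤ 1 := fun z => by simp only [f]; split_ifs <;> norm_num
  have hcard : (#(B₀ + B₁) : ℝ) ≤ (1 + η) * #B₀ := by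
    rwa [← coe_add, Nat.card_coe_set_eq, Nat.card_coe_set_eq, Set.ncard_coe_finset,
      Set.ncard_coe_finset, mul_div_assoc',
      div_le_div_iff_of_pos_right (by exact_mod_cast Fintype.card_pos)] at hadd
  obtain ⟨x₀, hx₀⟩ := hA
  have hx₀ : α ≤ dconv f (uniformWeight B₀) x₀ := by
    convert hx₀ using 1
    simp only [dconv, uniformWeight, f, ite_and, boole_mul, mem_coe, Nat.card_coe_set_eq,
      Set.ncard_coe_finset]
  have hshift : α - η ≤ dconv (dconv f (uniformWeight B₀)) ν x₀ :=
    le_dconv_of_forall_ne_zero hν0 hν1 x₀ fun d hd => by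
      obtain ⟨b, hb, b', hb', rfl⟩ := hνsupp d hd
      linarith [dconv_uniformWeight_sub_le hf0 hf1 h₀ hcard hb hb' x₀]
  rw [dconv_dconv_comm] at hshift
  obtain ⟨x, hx⟩ := exists_dconv_le (g := dconv f ν) (uniformWeight_nonneg B₀)
    (sum_uniformWeight h₀) x₀
  exact ⟨x, (by linarith [hη.1] : α - 2 * η ≤ dconv f ν x)⟩

/-- Hereditary density: if `μ_G(B₀+B₁) ≤ (1+η)μ_G(B₀)` and `‖1_A ∗ μ_{B₀}‖_∞ ≥ α`
then `‖1_A ∗ ν‖_∞ ≥ α − 2η` for every probability measure `ν` supported in `B₁ − B₁`. -/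
theorem hereditary_density {G : Type} [AddCommGroup G] [Fintype G]
    (α η : ℝ) (hα : α ∈ Set.Ioc (0 : ℝ) 1) (hη : η ∈ Set.Ioc (0 : ℝ) 1)
    (B₀ B₁ : Set G) (h₀ : B₀.Nonempty) (h₁ : B₁.Nonempty)
    (hadd : (Nat.card (B₀ + B₁) : ℝ) / Fintype.card G ≤
      (1 + η) * ((Nat.card B₀ : ℝ) / Fintype.card G))
    (A : Set G)
    (hA : ∃ x : G, α ≤ ∑ y : G, if x - y ∈ A ∧ y ∈ B₀ then (Nat.card B₀ : ℝ)⁻¹ else 0)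
    (ν : G → ℝ) (hν0 : ∀ y, 0 ≤ ν y) (hν1 : ∑ y : G, ν y = 1)
    (hνsupp : ∀ y, ν y ≠ 0 → y ∈ B₁ - B₁) :
    ∃ x : G, α - 2 * η ≤ ∑ y : G, (if x - y ∈ A then (1 : ℝ) else 0) * ν y :=
  hereditary_density_general α η hη B₀ B₁ h₀ hadd A hA ν hν0 hν1 hνsupp
end

section
/- Let G be a finite abelian group, B₀, B₁ ⊆ G nonempty sets with μ_G(B₀ + B₁) ≤ (1+η)·μ_G(B₀) for some η ∈ (0,1]. Then for any probability measure ν supported in B₁ − B₁, the total variation distance satisfies ‖μ_{B₀} ∗ ν − μ_{B₀}‖ ≤ 2η. -/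
open scoped Classical Pointwise

/-!
By the triangle inequality, `‖μ_{B₀} ∗ ν - μ_{B₀}‖` is at most the `ν`-average of
`‖μ_{B₀ + y} - μ_{B₀}‖ = 2 (|B₀ ∪ (B₀ + y)| - |B₀|) / |B₀|`. For `y = b - b'` with `b, b' ∈ B₁`,
translating by `b'` maps `B₀ ∪ (B₀ + y)` into `B₀ + B₁`, so this is at most
`2 (|B₀ + B₁| - |B₀|) / |B₀| ≤ 2η`.
-/

open Finset

theorem sum_abs_conv_sub_le {G : Type*} [AddGroup G] [Fintype G] {f ν : G → ℝ} {c : ℝ}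
    (hν0 : ∀ y, 0 ≤ ν y) (hν1 : ∑ y, ν y = 1)
    (hf : ∀ y, ν y ≠ 0 → ∑ x, |f (x - y) - f x| ≤ c) :
    ∑ x, |∑ y, f (x - y) * ν y - f x| ≤ c := by
  have hfν : ∀ y, (∑ x, |f (x - y) - f x|) * ν y ≤ c * ν y := fun y => by
    by_cases hy : ν y = 0
    · simp [hy]
    · exact mul_le_mul_of_nonneg_right (hf y hy) (hν0 y)
  calc ∑ x, |∑ y, f (x - y) * ν y - f x|
      = ∑ x, |∑ y, (f (x - y) - f x) * ν y| := by
        simp only [sub_mul, sum_sub_distrib, ← mul_sum, hν1, mul_one]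
    _ ≤ ∑ x, ∑ y, |f (x - y) - f x| * ν y := by
        gcongr with x
        refine (abs_sum_le_sum_abs _ _).trans_eq (sum_congr rfl fun y _ => ?_)
        rw [abs_mul, abs_of_nonneg (hν0 y)]
    _ = ∑ y, (∑ x, |f (x - y) - f x|) * ν y := by
        rw [sum_comm]; simp only [sum_mul]
    _ ≤ ∑ y, c * ν y := sum_le_sum fun y _ => hfν y
    _ = c := by rw [← mul_sum, hν1, mul_one]

theorem sum_ite_mem_const {α : Type*} [Fintype α] (S : Set α) [DecidablePred (· ∈ S)] (c : ℝ) :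
    ∑ x, (if x ∈ S then c else 0) = Nat.card S * c := by
  rw [sum_ite, sum_const_zero, add_zero, sum_const, nsmul_eq_mul, Nat.card_eq_card_toFinset]
  congr 3
  ext x
  simp

theorem natCard_union_vadd_le_natCard_add {G : Type*} [AddCommGroup G] [Finite G]
    {S C : Set G} {y : G} (hy : y ∈ C - C) :
    Nat.card ↑(S ∪ (y +ᵥ S)) ≤ Nat.card ↑(S + C) := by
  obtain ⟨b, hb, b', hb', rfl⟩ := hy
  rw [← Set.natCard_vadd_set b']
  refine Nat.card_mono (Set.toFinite _) ?_
  rw [Set.vadd_set_union, vadd_vadd, add_sub_cancel, add_comm S]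
  exact Set.union_subset (Set.vadd_set_subset_add hb') (Set.vadd_set_subset_add hb)

theorem sum_abs_ite_sub_translate {G : Type*} [AddCommGroup G] [Fintype G]
    (S : Set G) (y : G) {c : ℝ} (hc : 0 ≤ c) :
    ∑ x, |(if x - y ∈ S then c else 0) - (if x ∈ S then c else 0)| =
      2 * c * (Nat.card ↑(S ∪ (y +ᵥ S)) - Nat.card S) := by
  have hmem : ∀ x, x - y ∈ S ↔ x ∈ y +ᵥ S := fun x => by
    rw [Set.mem_vadd_set_iff_neg_vadd_mem, vadd_eq_add, neg_add_eq_sub]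
  have hpt : ∀ x, |(if x - y ∈ S then c else 0) - (if x ∈ S then c else 0)| =
      2 * (if x ∈ S ∪ (y +ᵥ S) then c else 0) - (if x ∈ y +ᵥ S then c else 0)
        - (if x ∈ S then c else 0) := fun x => by
    rw [hmem]
    split_ifs <;> simp_all [abs_of_nonneg] <;> ring
  simp only [hpt, sum_sub_distrib, ← mul_sum, sum_ite_mem_const, Set.natCard_vadd_set]
  ring

theorem sum_abs_uniform_translate_sub_le {G : Type*} [AddCommGroup G] [Fintype G]
    {S C : Set G} (hS : S.Nonempty) {η : ℝ}
    (hSC : (Nat.card ↑(S + C) : ℝ) ≤ (1 + η) * Nat.card S) {y : G} (hy : y ∈ C - C) :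
    ∑ x, |(if x - y ∈ S then (Nat.card S : ℝ)⁻¹ else 0) -
      (if x ∈ S then (Nat.card S : ℝ)⁻¹ else 0)| ≤ 2 * η := by
  have hS_pos : (0 : ℝ) < Nat.card S := by
    have := hS.to_subtype
    exact_mod_cast Nat.card_pos
  have hunion : (Nat.card ↑(S ∪ (y +ᵥ S)) : ℝ) ≤ Nat.card ↑(S + C) := by
    exact_mod_cast natCard_union_vadd_le_natCard_add hy
  rw [sum_abs_ite_sub_translate S y (inv_nonneg.2 hS_pos.le)]
  calc 2 * (Nat.card S : ℝ)⁻¹ * (Nat.card ↑(S ∪ (y +ᵥ S)) - Nat.card S)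
      ≤ 2 * (Nat.card S : ℝ)⁻¹ * (η * Nat.card S) := by gcongr; linarith
    _ = 2 * η := by field_simp

theorem tv_convolution_stability_general {G : Type} [AddCommGroup G] [Fintype G]
    (η : ℝ)
    (B₀ B₁ : Set G) (h₀ : B₀.Nonempty)
    (hadd : (Nat.card (B₀ + B₁) : ℝ) / Fintype.card G ≤
      (1 + η) * ((Nat.card B₀ : ℝ) / Fintype.card G))
    (ν : G → ℝ) (hν0 : ∀ y, 0 ≤ ν y) (hν1 : ∑ y : G, ν y = 1)
    (hνsupp : ∀ y, ν y ≠ 0 → y ∈ B₁ - B₁) :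
    ∑ x : G, |(∑ y : G, (if x - y ∈ B₀ then (Nat.card B₀ : ℝ)⁻¹ else 0) * ν y) -
        (if x ∈ B₀ then (Nat.card B₀ : ℝ)⁻¹ else 0)| ≤ 2 * η := by
  have hG : (0 : ℝ) < Fintype.card G := by
    have : Nonempty G := ⟨h₀.some⟩
    exact_mod_cast Fintype.card_pos
  have hdoubling : (Nat.card ↑(B₀ + B₁) : ℝ) ≤ (1 + η) * Nat.card B₀ := by
    rwa [← mul_div_assoc, div_le_div_iff_of_pos_right hG] at hadd
  exact sum_abs_conv_sub_le (f := fun x => if x ∈ B₀ then (Nat.card B₀ : ℝ)⁻¹ else 0)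
    hν0 hν1 fun y hy => sum_abs_uniform_translate_sub_le h₀ hdoubling (hνsupp y hy)

/-- Total variation stability: if `μ_G(B₀+B₁) ≤ (1+η)μ_G(B₀)` then for any probability
measure `ν` supported in `B₁ − B₁` we have `‖μ_{B₀} ∗ ν − μ_{B₀}‖ ≤ 2η`. -/
theorem tv_convolution_stability {G : Type} [AddCommGroup G] [Fintype G]
    (η : ℝ) (hη : η ∈ Set.Ioc (0 : ℝ) 1)
    (B₀ B₁ : Set G) (h₀ : B₀.Nonempty) (h₁ : B₁.Nonempty)
    (hadd : (Nat.card (B₀ + B₁) : ℝ) / Fintype.card G ≤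
      (1 + η) * ((Nat.card B₀ : ℝ) / Fintype.card G))
    (ν : G → ℝ) (hν0 : ∀ y, 0 ≤ ν y) (hν1 : ∑ y : G, ν y = 1)
    (hνsupp : ∀ y, ν y ≠ 0 → y ∈ B₁ - B₁) :
    ∑ x : G, |(∑ y : G, (if x - y ∈ B₀ then (Nat.card B₀ : ℝ)⁻¹ else 0) * ν y) -
        (if x ∈ B₀ then (Nat.card B₀ : ℝ)⁻¹ else 0)| ≤ 2 * η :=
  tv_convolution_stability_general η B₀ B₁ h₀ hadd ν hν0 hν1 hνsupp
end

section
/- Let G be a finite abelian group, μ a probability measure on G, A ⊆ G with μ(A) ≥ α > 0, and ε ∈ (0,1]. Suppose Λ is a set of characters of G that is 1-dissociated with respect to μ and is contained in {γ : |(1_A dμ)^(γ)| ≥ ε·μ(A)}. Then |Λ| ≤ C·ε⁻²·log(2α⁻¹) for an absolute constant C > 0. -/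
open scoped Classical

/-!
Take the Riesz product with `ω(λ) = (ε/4) · F(λ)/|F(λ)|`, where `F = (1_A dμ)^`, so that
`Re(ω(λ) λ(x))` has size at most `ε/4` and its `1_A dμ`-integral is `(ε/4)|F(λ)| ≥ ε²μ(A)/4`.
Since `1 + u ≥ exp(u - 2u²)` for `|u| ≤ 1/2`, the Riesz product dominates `exp(Y)` with
`Y = ∑_λ Re(ω(λ) λ) - ε²|Λ|/8`, and Jensen on `A` gives
`μ(A) exp(ε²|Λ|/8) ≤ ∫_A exp Y dμ ≤ ∫ p_ω dμ ≤ e`; taking logarithms finishes.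
-/

open Finset

namespace Real

lemma exp_sub_two_mul_sq_le_one_add {u : ℝ} (hu : |u| ≤ 2⁻¹) : exp (u - 2 * u ^ 2) ≤ 1 + u := by
  obtain ⟨hu₁, hu₂⟩ := abs_le.1 hu
  have hinv : exp (u - 2 * u ^ 2) * (1 - (u - 2 * u ^ 2)) ≤ 1 := by
    calc exp (u - 2 * u ^ 2) * (1 - (u - 2 * u ^ 2))
        ≤ exp (u - 2 * u ^ 2) * exp (-(u - 2 * u ^ 2)) := by
          gcongr; linarith [add_one_le_exp (-(u - 2 * u ^ 2))]
      _ = 1 := by rw [← exp_add, add_neg_cancel, exp_zero]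
  -- `(1 + u) (1 - u + 2u²) = 1 + u² + 2u³ ≥ 1` for `|u| ≤ 1/2`
  have hprod : 1 ≤ (1 + u) * (1 - (u - 2 * u ^ 2)) := by nlinarith
  have hpos : 0 < 1 - (u - 2 * u ^ 2) := by nlinarith
  nlinarith [exp_pos (u - 2 * u ^ 2)]

lemma exp_sum_sub_le_prod_one_add {ι : Type*} (s : Finset ι) {u : ι → ℝ} {t : ℝ} (ht : t ≤ 2⁻¹)
    (hu : ∀ i ∈ s, |u i| ≤ t) : exp (∑ i ∈ s, u i - 2 * t ^ 2 * #s) ≤ ∏ i ∈ s, (1 + u i) := by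
  have hsq : ∑ i ∈ s, 2 * u i ^ 2 ≤ 2 * t ^ 2 * #s := by
    calc ∑ i ∈ s, 2 * u i ^ 2 ≤ ∑ _i ∈ s, 2 * t ^ 2 := sum_le_sum fun i hi => by
          have := sq_le_sq' (abs_le.1 (hu i hi)).1 (abs_le.1 (hu i hi)).2
          linarith
      _ = 2 * t ^ 2 * #s := by rw [sum_const, nsmul_eq_mul]; ring
  calc exp (∑ i ∈ s, u i - 2 * t ^ 2 * #s) ≤ exp (∑ i ∈ s, (u i - 2 * u i ^ 2)) := by
        rw [sum_sub_distrib]; gcongr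
    _ = ∏ i ∈ s, exp (u i - 2 * u i ^ 2) := exp_sum _ _
    _ ≤ ∏ i ∈ s, (1 + u i) := prod_le_prod (fun i _ => (exp_pos _).le)
        fun i hi => exp_sub_two_mul_sq_le_one_add ((hu i hi).trans ht)

/-- Jensen's inequality for `exp`, via the tangent line at `m`. -/
lemma sum_mul_exp_le_sum_mul_exp {ι : Type*} (s : Finset ι) {v y : ι → ℝ} {m : ℝ}
    (hv : ∀ i ∈ s, 0 ≤ v i) (hm : (∑ i ∈ s, v i) * m ≤ ∑ i ∈ s, v i * y i) :
    (∑ i ∈ s, v i) * exp m ≤ ∑ i ∈ s, v i * exp (y i) := by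
  have htangent : ∀ i ∈ s, v i * (exp m * (y i - m + 1)) ≤ v i * exp (y i) := fun i hi => by
    gcongr ?_ * ?_
    · exact hv i hi
    · calc exp m * (y i - m + 1) ≤ exp m * exp (y i - m) := by gcongr; exact add_one_le_exp _
        _ = exp (y i) := by rw [← exp_add]; ring_nf
  have hsum : ∑ i ∈ s, v i * (exp m * (y i - m + 1))
      = exp m * ((∑ i ∈ s, v i * y i) - (∑ i ∈ s, v i) * m) + (∑ i ∈ s, v i) * exp m := by
    simp only [mul_sub, mul_add, sum_add_distrib, sum_sub_distrib, mul_sum, sum_mul]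
    exact congrArg₂ _ (congrArg₂ _ (sum_congr rfl fun _ _ => by ring)
      (sum_congr rfl fun _ _ => by ring)) (sum_congr rfl fun _ _ => by ring)
  have := sum_le_sum htangent
  rw [hsum] at this
  nlinarith [exp_pos m]

lemma le_three_halves_mul_log_of_mul_exp_le {α x : ℝ} (hα₀ : 0 < α) (hα₁ : α ≤ 1)
    (h : α * exp x ≤ exp 1) : x ≤ 3 / 2 * log (2 * α⁻¹) := by
  have hx : x ≤ 1 + log α⁻¹ := by
    rw [← exp_le_exp, exp_add, exp_log (inv_pos.2 hα₀), ← div_eq_mul_inv, le_div_iff₀ hα₀]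
    linarith
  have hlog : 0 ≤ log α⁻¹ := log_nonneg ((one_le_inv₀ hα₀).2 hα₁)
  rw [log_mul two_ne_zero (inv_ne_zero hα₀.ne')]
  linarith [log_two_gt_d9]

end Real

namespace Complex

open scoped ComplexConjugate

lemma norm_ofReal_mul_div_norm_le {t : ℝ} (ht : 0 ≤ t) (z : ℂ) : ‖(t : ℂ) * z / ‖z‖‖ ≤ t := by
  rcases eq_or_ne z 0 with rfl | hz
  · simpa using ht
  · rw [norm_div, norm_mul, norm_real, norm_real, Real.norm_of_nonneg ht, norm_norm,
      mul_div_cancel_right₀ _ (norm_ne_zero_iff.2 hz)]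

lemma re_ofReal_mul_div_norm_mul_conj (t : ℝ) (z : ℂ) :
    ((t : ℂ) * z / ‖z‖ * conj z).re = t * ‖z‖ := by
  rcases eq_or_ne z 0 with rfl | hz
  · simp
  · rw [div_mul_eq_mul_div, mul_assoc, mul_conj, normSq_eq_norm_sq, ← ofReal_mul,
      ← ofReal_div, ofReal_re]
    field_simp [norm_ne_zero_iff.2 hz]

lemma re_mul_conj_sum_ofReal_mul_conj {ι : Type*} (s : Finset ι) (ω : ℂ) (v : ι → ℝ) (f : ι → ℂ) :
    (ω * conj (∑ i ∈ s, (v i : ℂ) * conj (f i))).re = ∑ i ∈ s, v i * (ω * f i).re := by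
  simp only [map_sum, map_mul, conj_ofReal, conj_conj, mul_sum, re_sum]
  exact sum_congr rfl fun i _ => by rw [mul_left_comm, re_ofReal_mul]

end Complex

open Real
open scoped ComplexConjugate

theorem AddChar.sum_mul_exp_le_of_dissociated {G : Type*} [AddLeftCancelMonoid G] [Fintype G]
    {w v : G → ℝ} (hv : ∀ x, 0 ≤ v x) (hvw : ∀ x, v x ≤ w x) {Λ : Finset (AddChar G ℂ)}
    {K ε : ℝ} (hε₀ : 0 ≤ ε) (hε₂ : ε ≤ 2)
    (hdis : ∀ ω : AddChar G ℂ → ℂ, (∀ l, ‖ω l‖ ≤ 1) →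
      ∑ x, (∏ l ∈ Λ, (1 + (ω l * l x).re)) * w x ≤ exp K)
    (hspec : ∀ l ∈ Λ, ε * ∑ x, v x ≤ ‖∑ x, (v x : ℂ) * conj (l x)‖) :
    (∑ x, v x) * exp (ε ^ 2 / 8 * #Λ) ≤ exp K := by
  set t := ε / 4 with ht
  have ht₂ : t ≤ 2⁻¹ := by linarith
  set F : AddChar G ℂ → ℂ := fun l => ∑ x, (v x : ℂ) * conj (l x)
  set ω : AddChar G ℂ → ℂ := fun l => (t : ℂ) * F l / ‖F l‖
  set u : AddChar G ℂ → G → ℝ := fun l x => (ω l * l x).re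
  have hω : ∀ l, ‖ω l‖ ≤ t := fun l => Complex.norm_ofReal_mul_div_norm_le (by positivity) _
  have hu : ∀ l x, |u l x| ≤ t := fun l x => (Complex.abs_re_le_norm _).trans <| by
    rw [norm_mul, AddChar.norm_apply, mul_one]; exact hω l
  have hriesz : ∀ x, exp (∑ l ∈ Λ, u l x - 2 * t ^ 2 * #Λ) ≤ ∏ l ∈ Λ, (1 + u l x) := fun x =>
    exp_sum_sub_le_prod_one_add Λ ht₂ fun l _ => hu l x
  have hcorr : ∀ l ∈ Λ, t * ε * ∑ x, v x ≤ ∑ x, v x * u l x := fun l hl => by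
    rw [← Complex.re_mul_conj_sum_ofReal_mul_conj, Complex.re_ofReal_mul_div_norm_mul_conj,
      mul_assoc]
    exact mul_le_mul_of_nonneg_left (hspec l hl) (by positivity)
  have hmean : (∑ x, v x) * (ε ^ 2 / 8 * #Λ) ≤ ∑ x, v x * (∑ l ∈ Λ, u l x - 2 * t ^ 2 * #Λ) := by
    have hswap : ∑ x, v x * (∑ l ∈ Λ, u l x - 2 * t ^ 2 * #Λ)
        = ∑ l ∈ Λ, ∑ x, v x * u l x - (∑ x, v x) * (2 * t ^ 2 * #Λ) := by
      simp only [mul_sub, sum_sub_distrib, mul_sum, ← sum_mul]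
      rw [sum_comm]
    have hsum := sum_le_sum hcorr
    rw [sum_const, nsmul_eq_mul] at hsum
    rw [hswap]
    linarith [show (∑ x, v x) * (ε ^ 2 / 8 * #Λ)
      = #Λ * (t * ε * ∑ x, v x) - (∑ x, v x) * (2 * t ^ 2 * #Λ) by ring]
  calc (∑ x, v x) * exp (ε ^ 2 / 8 * #Λ)
      ≤ ∑ x, v x * exp (∑ l ∈ Λ, u l x - 2 * t ^ 2 * #Λ) :=
        sum_mul_exp_le_sum_mul_exp _ (fun x _ => hv x) hmean
    _ ≤ ∑ x, (∏ l ∈ Λ, (1 + u l x)) * w x := sum_le_sum fun x _ => by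
        rw [mul_comm]
        exact mul_le_mul (hriesz x) (hvw x) (hv x) ((exp_pos _).le.trans (hriesz x))
    _ ≤ exp K := hdis ω fun l => (hω l).trans (by linarith)

/-- Chang-type bound (Lemma `lem.changbd`): a `1`-dissociated set of characters inside the
`ε`-large spectrum of `1_A dμ` has size `O(ε⁻² log 2α⁻¹)`. -/
theorem chang_bound : ∃ C : ℝ, 0 < C ∧
    ∀ (G : Type) [AddCommGroup G] [Fintype G]
      (w : G → ℝ), (∀ x, 0 ≤ w x) → (∑ x : G, w x) = 1 →
      ∀ (A : Set G) (α ε : ℝ), 0 < α → ε ∈ Set.Ioc (0 : ℝ) 1 →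
      α ≤ (∑ x : G, if x ∈ A then w x else 0) →
      ∀ Λ : Finset (AddChar G ℂ),
      -- `Λ` is 1-dissociated with respect to `μ`
      (∀ ω : AddChar G ℂ → ℂ, (∀ l, ‖ω l‖ ≤ 1) →
        ∑ x : G, (∏ l ∈ Λ, (1 + (ω l * l x).re)) * w x ≤ Real.exp 1) →
      -- `Λ` is contained in the `ε`-large spectrum of `1_A dμ`
      (∀ l ∈ Λ, ε * (∑ x : G, if x ∈ A then w x else 0) ≤
        ‖∑ x : G, (if x ∈ A then (w x : ℂ) else 0) * (starRingEnd ℂ) (l x)‖) →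
      (Λ.card : ℝ) ≤ C * ε⁻¹ ^ 2 * Real.log (2 * α⁻¹) := by
  refine ⟨12, by norm_num, ?_⟩
  intro G _ _ w hw hw1 A α ε hα ⟨hε₀, hε₁⟩ hαA Λ hdis hspec
  set v : G → ℝ := fun x => if x ∈ A then w x else 0
  have hv : ∀ x, 0 ≤ v x := fun x => by simp only [v]; split_ifs <;> simp [hw x]
  have hvw : ∀ x, v x ≤ w x := fun x => by simp only [v]; split_ifs <;> simp [hw x]
  have hα₁ : α ≤ 1 := hαA.trans (hw1 ▸ sum_le_sum fun x _ => hvw x)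
  have hspec' : ∀ l ∈ Λ, ε * ∑ x, v x ≤ ‖∑ x, (v x : ℂ) * conj (l x)‖ := by
    simpa only [v, apply_ite Complex.ofReal, Complex.ofReal_zero] using hspec
  have hexp := AddChar.sum_mul_exp_le_of_dissociated hv hvw hε₀.le (by linarith) hdis hspec'
  have hlog := le_three_halves_mul_log_of_mul_exp_le hα hα₁
    ((mul_le_mul_of_nonneg_right hαA (exp_pos _).le).trans hexp)
  calc (#Λ : ℝ) = 8 * ε⁻¹ ^ 2 * (ε ^ 2 / 8 * #Λ) := by field_simp
    _ ≤ 8 * ε⁻¹ ^ 2 * (3 / 2 * log (2 * α⁻¹)) := by gcongr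
    _ = 12 * ε⁻¹ ^ 2 * log (2 * α⁻¹) := by ring
end

section
/- Let G be a finite abelian group, μ a probability measure on G, and Λ a finite set of characters that is 1-dissociated with respect to μ. Then for every g ∈ ℓ²(Λ), ∫ exp(Re Σ_{λ∈Λ} g(λ)·λ(x)) dμ(x) ≤ exp(1 + ‖g‖²_{ℓ²(Λ)}/2). -/
/-!
Choose `ω(λ) = tanh ‖g λ‖ · g λ / ‖g λ‖`. Writing `g λ · λ x = ‖g λ‖ y` with `|y| ≤ 1`, convexity of
`exp` gives `exp (‖g λ‖ y) ≤ cosh ‖g λ‖ · (1 + Re (ω(λ) λ x))`, so the integrand is dominated by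
`∏ cosh ‖g λ‖` times the Riesz product `p_ω`, whose integral is at most `e` by dissociativity;
finally `cosh s ≤ exp (s² / 2)`.
-/

open Finset Complex

/-- At `c = 0` the factor `c / ‖c‖` is `0`, and so is the coefficient. -/
noncomputable def rieszCoeff (c : ℂ) : ℂ := Real.tanh ‖c‖ * (c / ‖c‖)

theorem norm_rieszCoeff_le_one (c : ℂ) : ‖rieszCoeff c‖ ≤ 1 := by
  rw [rieszCoeff, norm_mul, norm_div, norm_real, norm_real, norm_norm, Real.norm_eq_abs]
  exact mul_le_one₀ (Real.abs_tanh_lt_one _).le (by positivity) (div_self_le_one _)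

theorem exp_re_mul_le_cosh_mul (c : ℂ) {a : ℂ} (ha : ‖a‖ ≤ 1) :
    Real.exp (c * a).re ≤ Real.cosh ‖c‖ * (1 + (rieszCoeff c * a).re) := by
  rcases eq_or_ne c 0 with rfl | hc
  · simp [rieszCoeff]
  set t := ‖c‖
  have ht : (t : ℂ) ≠ 0 := by simpa [t] using hc
  set y := (c / t * a).re
  have hy : |y| ≤ 1 := by
    refine (abs_re_le_norm _).trans ?_
    rwa [norm_mul, norm_div, norm_real, norm_norm, div_self (norm_ne_zero_iff.2 hc), one_mul]
  have hca : (c * a).re = y * t := by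
    rw [show c * a = t * (c / t * a) by field_simp, re_ofReal_mul, mul_comm]
  have hω : (rieszCoeff c * a).re = Real.tanh t * y := by
    rw [rieszCoeff, mul_assoc, re_ofReal_mul]
  rw [hca, hω, Real.tanh_eq_sinh_div_cosh, mul_one_add, ← mul_assoc,
    mul_div_cancel₀ _ (Real.cosh_pos t).ne']
  exact (Real.exp_mul_le_cosh_add_mul_sinh hy t).trans_eq (by ring)

theorem exp_re_sum_le_prod_cosh_mul_prod {ι : Type*} (s : Finset ι) (c a : ι → ℂ)
    (ha : ∀ i ∈ s, ‖a i‖ ≤ 1) :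
    Real.exp (∑ i ∈ s, c i * a i).re ≤
      (∏ i ∈ s, Real.cosh ‖c i‖) * ∏ i ∈ s, (1 + (rieszCoeff (c i) * a i).re) := by
  rw [re_sum, Real.exp_sum, ← prod_mul_distrib]
  exact prod_le_prod (fun _ _ => (Real.exp_pos _).le) fun i hi => exp_re_mul_le_cosh_mul _ (ha i hi)

theorem prod_cosh_norm_le_exp {ι : Type*} (s : Finset ι) (c : ι → ℂ) :
    ∏ i ∈ s, Real.cosh ‖c i‖ ≤ Real.exp ((∑ i ∈ s, ‖c i‖ ^ 2) / 2) := by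
  rw [sum_div, Real.exp_sum]
  exact prod_le_prod (fun _ _ => (Real.cosh_pos _).le) fun _ _ => Real.cosh_le_exp_half_sq _

theorem dissociated_exp_bound_general {G : Type} [AddCommGroup G] [Fintype G]
    (w : G → ℝ) (hw0 : ∀ x, 0 ≤ w x)
    (Λ : Finset (AddChar G ℂ))
    (hdis : ∀ ω : AddChar G ℂ → ℂ, (∀ l, ‖ω l‖ ≤ 1) →
      ∑ x : G, (∏ l ∈ Λ, (1 + (ω l * l x).re)) * w x ≤ Real.exp 1)
    (g : AddChar G ℂ → ℂ) :
    ∑ x : G, Real.exp ((∑ l ∈ Λ, g l * l x).re) * w x ≤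
      Real.exp (1 + (∑ l ∈ Λ, ‖g l‖ ^ 2) / 2) := by
  set C := ∏ l ∈ Λ, Real.cosh ‖g l‖
  have hC : 0 ≤ C := prod_nonneg fun _ _ => (Real.cosh_pos _).le
  have hpoint : ∀ x, Real.exp (∑ l ∈ Λ, g l * l x).re ≤
      C * ∏ l ∈ Λ, (1 + (rieszCoeff (g l) * l x).re) := fun x =>
    exp_re_sum_le_prod_cosh_mul_prod Λ g (fun l => l x) fun l _ => (AddChar.norm_apply l x).le
  calc ∑ x : G, Real.exp ((∑ l ∈ Λ, g l * l x).re) * w x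
      ≤ ∑ x : G, (C * ∏ l ∈ Λ, (1 + (rieszCoeff (g l) * l x).re)) * w x :=
        sum_le_sum fun x _ => mul_le_mul_of_nonneg_right (hpoint x) (hw0 x)
    _ = C * ∑ x : G, (∏ l ∈ Λ, (1 + (rieszCoeff (g l) * l x).re)) * w x := by
        simp_rw [mul_assoc, mul_sum]
    _ ≤ C * Real.exp 1 :=
        mul_le_mul_of_nonneg_left (hdis _ fun l => norm_rieszCoeff_le_one (g l)) hC
    _ ≤ Real.exp ((∑ l ∈ Λ, ‖g l‖ ^ 2) / 2) * Real.exp 1 :=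
        mul_le_mul_of_nonneg_right (prod_cosh_norm_le_exp Λ g) (Real.exp_pos 1).le
    _ = Real.exp (1 + (∑ l ∈ Λ, ‖g l‖ ^ 2) / 2) := by
        rw [← Real.exp_add, add_comm]

/-- Exponential moment bound for a `1`-dissociated set of characters. -/
theorem dissociated_exp_bound {G : Type} [AddCommGroup G] [Fintype G]
    (w : G → ℝ) (hw0 : ∀ x, 0 ≤ w x) (hw1 : (∑ x : G, w x) = 1)
    (Λ : Finset (AddChar G ℂ))
    (hdis : ∀ ω : AddChar G ℂ → ℂ, (∀ l, ‖ω l‖ ≤ 1) →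
      ∑ x : G, (∏ l ∈ Λ, (1 + (ω l * l x).re)) * w x ≤ Real.exp 1)
    (g : AddChar G ℂ → ℂ) :
    ∑ x : G, Real.exp ((∑ l ∈ Λ, g l * l x).re) * w x ≤
      Real.exp (1 + (∑ l ∈ Λ, ‖g l‖ ^ 2) / 2) :=
  dissociated_exp_bound_general w hw0 Λ hdis g
end

section
/- Let G be a finite abelian group, B₀ ⊆ G nonempty, k ∈ ℕ, and B₁ ⊆ G nonempty with μ_G(B₀ + k·B₁) ≤ 2·μ_G(B₀). Define the probability measure μ := μ_{B₀ + k·B₁} ∗ μ_{−B₁} ∗ ⋯ ∗ μ_{−B₁} (k copies of μ_{−B₁}). Then for every set E ⊆ B₀ we have (1/2)·μ_{B₀}(E) ≤ μ(E) ≤ μ_{B₀}(E). -/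
/-!
`μ_{−B₁}^{∗k}` is a probability measure supported on `−(k·B₁)`, and `x − y ∈ B₀ + k·B₁` whenever
`x ∈ B₀` and `y ∈ −(k·B₁)`. So at each `x ∈ B₀` the convolution only averages the constant value
`1/|B₀ + k·B₁|` of the density of `μ_{B₀+k·B₁}`, whence `μ(E) = |E|/|B₀ + k·B₁|` for `E ⊆ B₀`.
The claim follows from `|B₀| ≤ |B₀ + k·B₁| ≤ 2|B₀|`.
-/

open scoped Classical Pointwise

/-- Convolution of densities of measures on a finite abelian group. -/
def mconv {G : Type*} [AddCommGroup G] [Fintype G] (f g : G → ℝ) : G → ℝ :=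
  fun x => ∑ y : G, f (x - y) * g y

/-- `k`-fold convolution power of a density (the `0`-th power is the point mass at `0`). -/
noncomputable def iterConv {G : Type*} [AddCommGroup G] [Fintype G] (f : G → ℝ) : ℕ → G → ℝ
  | 0 => fun x => if x = 0 then 1 else 0
  | n + 1 => mconv f (iterConv f n)

/-- `k`-fold iterated sumset `k·B = B + ⋯ + B`. -/
def iterSumset {G : Type*} [AddCommGroup G] (s : Set G) : ℕ → Set G
  | 0 => {0}
  | n + 1 => s + iterSumset s n

/-- Density of the uniform probability measure on a set. -/
noncomputable def unifDensity {G : Type*} [AddCommGroup G] [Fintype G] (S : Set G) : G → ℝ :=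
  fun x => if x ∈ S then (Nat.card S : ℝ)⁻¹ else 0

lemma sum_ite_mem_of_eqOn {G : Type*} [Fintype G] {E : Set G} {f : G → ℝ} {c : ℝ}
    (hf : ∀ x ∈ E, f x = c) : (∑ x, if x ∈ E then f x else 0) = Nat.card E * c := by
  rw [Finset.sum_congr rfl fun x _ => ite_congr rfl (hf x) fun _ => rfl]
  simp [Finset.sum_ite, Nat.card_eq_fintype_card]

section Convolution

variable {G : Type*} [AddCommGroup G] [Fintype G]

lemma sum_mconv (f g : G → ℝ) : ∑ x, mconv f g x = (∑ x, f x) * ∑ x, g x := by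
  unfold mconv
  rw [Finset.sum_comm, Finset.mul_sum]
  refine Finset.sum_congr rfl fun y _ => ?_
  rw [← Finset.sum_mul, Fintype.sum_equiv (Equiv.subRight y) (fun x => f (x - y)) f fun _ => rfl]

lemma sum_iterConv {f : G → ℝ} (hf : ∑ x, f x = 1) (k : ℕ) : ∑ x, iterConv f k x = 1 := by
  induction k with
  | zero => simp [iterConv]
  | succ n ih => rw [iterConv, sum_mconv, hf, ih, one_mul]

lemma mem_iterSumset_of_iterConv_ne_zero {f : G → ℝ} {s : Set G} (hf : ∀ x, f x ≠ 0 → x ∈ s)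
    (k : ℕ) {y : G} (hy : iterConv f k y ≠ 0) : y ∈ iterSumset s k := by
  induction k generalizing y with
  | zero => by_contra h; simp_all [iterConv, iterSumset]
  | succ n ih =>
    obtain ⟨z, -, hz⟩ := Finset.exists_ne_zero_of_sum_ne_zero hy
    exact ⟨y - z, hf _ (left_ne_zero_of_mul hz), z, ih (right_ne_zero_of_mul hz),
      sub_add_cancel y z⟩

lemma sum_unifDensity {S : Set G} (hS : S.Nonempty) : ∑ x, unifDensity S x = 1 := by
  have hcard : (0 : ℝ) < Nat.card S := by
    have := hS.to_subtype
    exact_mod_cast Nat.card_pos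
  simp only [unifDensity]
  rw [sum_ite_mem_of_eqOn fun _ _ => rfl, mul_inv_cancel₀ hcard.ne']

lemma mem_of_unifDensity_ne_zero {S : Set G} {x : G} (hx : unifDensity S x ≠ 0) : x ∈ S := by
  by_contra h
  simp [unifDensity, h] at hx

lemma mconv_unifDensity_of_sub_mem {S T : Set G} {g : G → ℝ} (hg : ∑ y, g y = 1)
    (hgT : ∀ y, g y ≠ 0 → y ∈ T) {x : G} (hx : ∀ y ∈ T, x - y ∈ S) :
    mconv (unifDensity S) g x = (Nat.card S : ℝ)⁻¹ := by
  have hterm : ∀ y, unifDensity S (x - y) * g y = (Nat.card S : ℝ)⁻¹ * g y := by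
    intro y
    by_cases hy : g y = 0
    · simp [hy]
    · rw [unifDensity, if_pos (hx y (hgT y hy))]
  simp only [mconv, hterm, ← Finset.mul_sum, hg, mul_one]

end Convolution

section Sumset

variable {G : Type*} [AddCommGroup G]

lemma iterSumset_nonempty {s : Set G} (hs : s.Nonempty) (k : ℕ) : (iterSumset s k).Nonempty := by
  induction k with
  | zero => exact Set.singleton_nonempty 0
  | succ n ih => exact hs.add ih

lemma iterSumset_neg (s : Set G) (k : ℕ) : iterSumset (-s) k = -iterSumset s k := by
  induction k with
  | zero => simp [iterSumset]
  | succ n ih => rw [iterSumset, iterSumset, ih, neg_add]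

end Sumset

lemma natCard_le_natCard_add {α : Type*} [Add α] [IsRightCancelAdd α] [Finite α]
    (A : Set α) {T : Set α} (hT : T.Nonempty) : Nat.card A ≤ Nat.card (A + T) := by
  obtain ⟨b, hb⟩ := hT
  rw [← Nat.card_image_of_injective (add_left_injective b) A, ← Set.add_singleton]
  exact Nat.card_mono (Set.toFinite _) (Set.add_subset_add_left (Set.singleton_subset_iff.2 hb))

lemma half_mul_div_le_div_and_div_le_div {a b c : ℝ} (ha : 0 ≤ a) (hbc : b ≤ c)
    (hcb : c ≤ 2 * b) : 1 / 2 * (a / b) ≤ a / c ∧ a / c ≤ a / b := by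
  rcases (show 0 ≤ b by linarith).eq_or_lt with rfl | hb
  · simp [le_antisymm (by simpa using hcb) hbc]
  · refine ⟨?_, div_le_div_of_nonneg_left ha hb hbc⟩
    rw [one_div_mul_eq_div, div_div, mul_comm]
    exact div_le_div_of_nonneg_left ha (hb.trans_le hbc) hcb

lemma mconv_eq_inv_natCard_of_mem {G : Type*} [AddCommGroup G] [Fintype G] {B₀ B₁ : Set G}
    (h₁ : B₁.Nonempty) (k : ℕ) {x : G} (hx : x ∈ B₀) :
    mconv (unifDensity (B₀ + iterSumset B₁ k)) (iterConv (unifDensity (-B₁)) k) x =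
      (Nat.card (B₀ + iterSumset B₁ k) : ℝ)⁻¹ := by
  refine mconv_unifDensity_of_sub_mem (sum_iterConv (sum_unifDensity h₁.neg) k)
    (fun _ => mem_iterSumset_of_iterConv_ne_zero (fun _ => mem_of_unifDensity_ne_zero) k)
    fun y hy => ?_
  rw [iterSumset_neg] at hy
  exact ⟨x, hx, -y, hy, (sub_eq_add_neg x y).symm⟩

theorem measure_comparison_general {G : Type} [AddCommGroup G] [Fintype G]
    (B₀ B₁ : Set G) (h₁ : B₁.Nonempty) (k : ℕ)
    (hcard : (Nat.card (B₀ + iterSumset B₁ k) : ℝ) / Fintype.card G ≤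
      2 * ((Nat.card B₀ : ℝ) / Fintype.card G)) :
    ∀ E : Set G, E ⊆ B₀ →
      (1 / 2) * ((Nat.card E : ℝ) / Nat.card B₀) ≤
        (∑ x : G, if x ∈ E then
          mconv (unifDensity (B₀ + iterSumset B₁ k)) (iterConv (unifDensity (-B₁)) k) x
          else 0) ∧
      (∑ x : G, if x ∈ E then
          mconv (unifDensity (B₀ + iterSumset B₁ k)) (iterConv (unifDensity (-B₁)) k) x
          else 0) ≤ (Nat.card E : ℝ) / Nat.card B₀ := by
  intro E hE
  have hupper : (Nat.card (B₀ + iterSumset B₁ k) : ℝ) ≤ 2 * Nat.card B₀ := by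
    rwa [← mul_div_assoc, div_le_div_iff_of_pos_right (by positivity)] at hcard
  have hlower : (Nat.card B₀ : ℝ) ≤ Nat.card (B₀ + iterSumset B₁ k) := by
    exact_mod_cast natCard_le_natCard_add B₀ (iterSumset_nonempty h₁ k)
  rw [sum_ite_mem_of_eqOn fun x hx => mconv_eq_inv_natCard_of_mem h₁ k (hE hx), ← div_eq_mul_inv]
  exact half_mul_div_le_div_and_div_le_div (Nat.cast_nonneg _) hlower hupper

/-- If `μ_G(B₀ + k·B₁) ≤ 2μ_G(B₀)` and `μ := μ_{B₀+k·B₁} ∗ μ_{−B₁}^{∗k}`, then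
`(1/2)·μ_{B₀}(E) ≤ μ(E) ≤ μ_{B₀}(E)` for every `E ⊆ B₀`. -/
theorem measure_comparison {G : Type} [AddCommGroup G] [Fintype G]
    (B₀ B₁ : Set G) (h₀ : B₀.Nonempty) (h₁ : B₁.Nonempty) (k : ℕ)
    (hcard : (Nat.card (B₀ + iterSumset B₁ k) : ℝ) / Fintype.card G ≤
      2 * ((Nat.card B₀ : ℝ) / Fintype.card G)) :
    ∀ E : Set G, E ⊆ B₀ →
      (1 / 2) * ((Nat.card E : ℝ) / Nat.card B₀) ≤
        (∑ x : G, if x ∈ E then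
          mconv (unifDensity (B₀ + iterSumset B₁ k)) (iterConv (unifDensity (-B₁)) k) x
          else 0) ∧
      (∑ x : G, if x ∈ E then
          mconv (unifDensity (B₀ + iterSumset B₁ k)) (iterConv (unifDensity (-B₁)) k) x
          else 0) ≤ (Nat.card E : ℝ) / Nat.card B₀ :=
  measure_comparison_general B₀ B₁ h₁ k hcard
end
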